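/- For every integer n > 2, A_n = Σ_{d | n} μ(n/d)·N_d, where μ is the Möbius function, A_n is the number of numerical semigroups with maximum primitive n, and N_d is the number of numerical semigroups with Frobenius number d. -/

import Mathlib

/-- A numerical semigroup: a cofinite additive submonoid of ℕ containing 0. -/
structure NumericalSemigroup where
  carrier : Set ℕ
  zero_mem : 0 ∈ carrier
  add_mem : ∀ ⦃a b : ℕ⦄, a ∈ carrier → b ∈ carrier → a + b ∈ carrier
  cofinite : (carrierᶜ : Set ℕ).Finite

namespace NumericalSemigroup

/-- The primitives (minimal generators): nonzero elements not expressible as a sum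
of two nonzero elements. -/
def primitives (S : NumericalSemigroup) : Set ℕ :=
  {x | x ∈ S.carrier ∧ x ≠ 0 ∧
    ¬ ∃ a b : ℕ, a ∈ S.carrier ∧ b ∈ S.carrier ∧ a ≠ 0 ∧ b ≠ 0 ∧ x = a + b}

/-- The maximum primitive. -/
noncomputable def maxPrim (S : NumericalSemigroup) : ℕ := sSup (primitives S)

/-- The multiplicity: the least primitive (= least nonzero element). -/
noncomputable def multiplicity (S : NumericalSemigroup) : ℕ := sInf (primitives S)

/-- The Frobenius number: the largest gap (0 for ℕ by convention here). -/
noncomputable def frob (S : NumericalSemigroup) : ℕ := sSup (S.carrierᶜ)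

/-- The set of left elements. -/
noncomputable def lefts (S : NumericalSemigroup) : Set ℕ := S.carrier ∩ Set.Iio (frob S)

/-- The extended set of left elements. -/
noncomputable def extLefts (S : NumericalSemigroup) : Set ℕ := lefts S ∪ {frob S}

end NumericalSemigroup

open NumericalSemigroup

/-- The gcd of a set of naturals: the greatest common divisor of all its elements. -/
noncomputable def setGcd (A : Set ℕ) : ℕ := sSup {d | ∀ x ∈ A, d ∣ x}

/-- The number of numerical semigroups with maximum primitive `n`. -/
noncomputable def countMaxPrim (n : ℕ) : ℕ :=
  {S : NumericalSemigroup | maxPrim S = n}.ncard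

/-- The number of numerical semigroups with Frobenius number `n`. -/
noncomputable def countFrob (n : ℕ) : ℕ :=
  {S : NumericalSemigroup | frob S = n}.ncard


namespace NumericalSemigroup

variable {S T : NumericalSemigroup}

lemma ext' (h : S.carrier = T.carrier) : S = T := by
  cases S; cases T; cases h; rfl

lemma mem_of_frob_lt {x : ℕ} (h : frob S < x) : x ∈ S.carrier := by
  by_contra hx
  exact absurd (le_csSup S.cofinite.bddAbove hx) h.not_ge

lemma frob_not_mem (h : frob S ≠ 0) : frob S ∉ S.carrier := by
  rcases Set.eq_empty_or_nonempty (S.carrierᶜ) with he | hne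
  · exfalso
    apply h
    rw [frob, he, csSup_empty]
    rfl
  · exact Nat.sSup_mem hne S.cofinite.bddAbove

lemma succ_frob_mem : frob S + 1 ∈ S.carrier := mem_of_frob_lt (Nat.lt_succ_self _)

lemma nonzeros_nonempty : {x | x ∈ S.carrier ∧ x ≠ 0}.Nonempty :=
  ⟨frob S + 1, succ_frob_mem, Nat.succ_ne_zero _⟩

lemma sInf_nonzeros_primitive : sInf {x | x ∈ S.carrier ∧ x ≠ 0} ∈ primitives S := by
  have hm := Nat.sInf_mem (nonzeros_nonempty (S := S))
  refine ⟨hm.1, hm.2, ?_⟩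
  rintro ⟨a, b, ha, hb, ha0, hb0, hab⟩
  have h1 : sInf {x | x ∈ S.carrier ∧ x ≠ 0} ≤ a := Nat.sInf_le ⟨ha, ha0⟩
  omega

lemma primitives_nonempty : (primitives S).Nonempty := ⟨_, sInf_nonzeros_primitive⟩

lemma bddAbove_primitives : BddAbove (primitives S) := by
  refine ⟨frob S + sInf {x | x ∈ S.carrier ∧ x ≠ 0}, ?_⟩
  rintro p ⟨hp, hp0, hnd⟩
  by_contra h
  push_neg at h
  have hm := Nat.sInf_mem (nonzeros_nonempty (S := S))
  set m := sInf {x | x ∈ S.carrier ∧ x ≠ 0} with hmdef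
  have h1 : p - m ∈ S.carrier := mem_of_frob_lt (by omega)
  exact hnd ⟨m, p - m, hm.1, h1, hm.2, by omega, by omega⟩

lemma maxPrim_mem : maxPrim S ∈ primitives S :=
  Nat.sSup_mem primitives_nonempty bddAbove_primitives

lemma le_maxPrim {p : ℕ} (hp : p ∈ primitives S) : p ≤ maxPrim S :=
  le_csSup bddAbove_primitives hp

lemma maxPrim_pos : 0 < maxPrim S := Nat.pos_of_ne_zero (maxPrim_mem (S := S)).2.1

lemma strongInd (P : ℕ → Prop) (h0 : P 0)
    (hp : ∀ p ∈ primitives S, P p)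
    (hadd : ∀ a b, a ∈ S.carrier → b ∈ S.carrier → a ≠ 0 → b ≠ 0 → P a → P b → P (a + b)) :
    ∀ x, x ∈ S.carrier → P x := by
  intro x
  induction x using Nat.strong_induction_on with
  | _ x ih =>
    intro hx
    rcases eq_or_ne x 0 with rfl | hx0
    · exact h0
    by_cases hxp : x ∈ primitives S
    · exact hp x hxp
    · have hdec : ∃ a b, a ∈ S.carrier ∧ b ∈ S.carrier ∧ a ≠ 0 ∧ b ≠ 0 ∧ x = a + b := by
        by_contra hc
        exact hxp ⟨hx, hx0, hc⟩
      obtain ⟨a, b, ha, hb, ha0, hb0, rfl⟩ := hdec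
      exact hadd a b ha hb ha0 hb0 (ih a (by omega) ha) (ih b (by omega) hb)

lemma eq_of_primitives_eq (h : primitives S = primitives T) : S = T := by
  have key : ∀ {A B : NumericalSemigroup}, primitives A = primitives B → A.carrier ⊆ B.carrier := by
    intro A B hAB x hx
    refine strongInd (S := A) (· ∈ B.carrier) B.zero_mem ?_ (fun a b _ _ _ _ pa pb => B.add_mem pa pb) x hx
    intro p hp
    exact (hAB ▸ hp).1
  exact ext' (Set.Subset.antisymm (key h) (key h.symm))

lemma finite_setOf_maxPrim (k : ℕ) : {S : NumericalSemigroup | maxPrim S = k}.Finite := by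
  have hinj : Set.InjOn (fun S : NumericalSemigroup => {i : Fin (k+1) | (i : ℕ) ∈ primitives S})
      {S | maxPrim S = k} := by
    intro A hA B hB h
    simp only at h
    refine eq_of_primitives_eq ?_
    ext x
    constructor
    · intro hx
      have hxk : x ≤ k := hA ▸ le_maxPrim hx
      have hmem : (⟨x, by omega⟩ : Fin (k+1)) ∈ {i : Fin (k+1) | (i : ℕ) ∈ primitives A} := hx
      rw [h] at hmem
      exact hmem
    · intro hx
      have hxk : x ≤ k := hB ▸ le_maxPrim hx
      have hmem : (⟨x, by omega⟩ : Fin (k+1)) ∈ {i : Fin (k+1) | (i : ℕ) ∈ primitives B} := hx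
      rw [← h] at hmem
      exact hmem
  exact Set.Finite.of_finite_image (Set.toFinite _) hinj

end NumericalSemigroup

namespace NumericalSemigroup

variable {S : NumericalSemigroup}

lemma finite_extLefts (S : NumericalSemigroup) : (extLefts S).Finite := by
  refine Set.Finite.subset (Set.finite_Iic (frob S)) ?_
  rintro x (⟨-, hx⟩ | hx)
  · exact Set.mem_Iic.2 (le_of_lt (Set.mem_Iio.1 hx))
  · exact Set.mem_Iic.2 (le_of_eq hx)

noncomputable def egcd (S : NumericalSemigroup) : ℕ := (finite_extLefts S).toFinset.gcd id

lemma egcd_dvd {x : ℕ} (hx : x ∈ extLefts S) : egcd S ∣ x :=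
  Finset.gcd_dvd ((Set.Finite.mem_toFinset _).2 hx)

lemma dvd_egcd {e : ℕ} (h : ∀ x ∈ extLefts S, e ∣ x) : e ∣ egcd S :=
  Finset.dvd_gcd fun x hx => h x ((Set.Finite.mem_toFinset _).1 hx)

lemma frob_mem_extLefts : frob S ∈ extLefts S := Or.inr rfl

lemma egcd_dvd_frob : egcd S ∣ frob S := egcd_dvd frob_mem_extLefts

lemma extLefts_le {x : ℕ} (hx : x ∈ extLefts S) : x ≤ frob S := by
  rcases hx with ⟨-, hx⟩ | hx
  · exact le_of_lt (Set.mem_Iio.1 hx)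
  · exact le_of_eq hx

/-- Every element of the closure of `extLefts` is divisible by `egcd`. -/
lemma egcd_dvd_closure : ∀ x ∈ AddSubmonoid.closure (extLefts S), egcd S ∣ x := by
  intro x hx
  exact AddSubmonoid.closure_induction (fun y hy => egcd_dvd hy) (dvd_zero _)
    (fun a b _ _ ha hb => dvd_add ha hb) hx

/-- There exist `a b` in the closure with `a = b + egcd S`. -/
lemma exists_consec_closure :
    ∃ a b, a ∈ AddSubmonoid.closure (extLefts S) ∧ b ∈ AddSubmonoid.closure (extLefts S) ∧
      a = b + egcd S := by
  classical
  set H : AddSubgroup ℤ := AddSubgroup.closure ((fun x : ℕ => (x : ℤ)) '' extLefts S) with hH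
  have hdvdH : ∀ z ∈ H, (egcd S : ℤ) ∣ z := by
    intro z hz
    refine AddSubgroup.closure_induction ?_ (dvd_zero _)
      (fun a b _ _ ha hb => dvd_add ha hb) (fun a _ ha => (dvd_neg).2 ha) hz
    rintro x ⟨y, hy, rfl⟩
    exact Int.natCast_dvd_natCast.2 (egcd_dvd hy)
  obtain ⟨k, hk⟩ := Int.subgroup_cyclic H
  have hkH : k ∈ H := by
    rw [hk]
    exact AddSubgroup.subset_closure rfl
  have hmemH : ∀ z ∈ H, k ∣ z := by
    intro z hz
    rw [hk, ← AddSubgroup.zmultiples_eq_closure] at hz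
    exact Int.mem_zmultiples_iff.1 hz
  have h1 : k.natAbs ∣ egcd S := by
    refine dvd_egcd fun x hx => ?_
    have hx' : k ∣ (x : ℤ) := hmemH _ (AddSubgroup.subset_closure ⟨x, hx, rfl⟩)
    have := Int.natAbs_dvd_natAbs.2 hx'
    simpa using this
  have h2 : egcd S ∣ k.natAbs := by
    have := Int.natAbs_dvd_natAbs.2 (hdvdH k hkH)
    simpa using this
  have hegcdH : ((egcd S : ℤ)) ∈ H := by
    have heq : egcd S = k.natAbs := Nat.dvd_antisymm h2 h1
    rcases Int.natAbs_eq k with hcase | hcase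
    · rw [heq, ← hcase]; exact hkH
    · have : ((k.natAbs : ℤ)) = -k := by omega
      rw [heq, this]; exact H.neg_mem hkH
  have hdiff : ∀ z ∈ H, ∃ a b : ℕ, a ∈ AddSubmonoid.closure (extLefts S) ∧
      b ∈ AddSubmonoid.closure (extLefts S) ∧ z = (a : ℤ) - b := by
    intro z hz
    refine AddSubgroup.closure_induction ?_ ⟨0, 0, AddSubmonoid.zero_mem _, AddSubmonoid.zero_mem _, by simp⟩
      ?_ ?_ hz
    · rintro x ⟨y, hy, rfl⟩
      exact ⟨y, 0, AddSubmonoid.subset_closure hy, AddSubmonoid.zero_mem _, by simp⟩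
    · rintro x y _ _ ⟨a, b, ha, hb, rfl⟩ ⟨c, d, hc, hd, rfl⟩
      exact ⟨a + c, b + d, AddSubmonoid.add_mem _ ha hc, AddSubmonoid.add_mem _ hb hd, by push_cast; ring⟩
    · rintro x _ ⟨a, b, ha, hb, rfl⟩
      exact ⟨b, a, hb, ha, by ring⟩
  obtain ⟨a, b, ha, hb, hab⟩ := hdiff _ hegcdH
  exact ⟨a, b, ha, hb, by omega⟩

end NumericalSemigroup

namespace NumericalSemigroup

variable {S : NumericalSemigroup}

lemma extLefts_cases {x : ℕ} (h : x ∈ extLefts S) :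
    x = frob S ∨ (x ∈ S.carrier ∧ x < frob S) := by
  rcases h with ⟨hS, hlt⟩ | h
  · exact Or.inr ⟨hS, Set.mem_Iio.1 hlt⟩
  · exact Or.inl h

lemma lefts_subset_extLefts : lefts S ⊆ extLefts S := Set.subset_union_left

/-- Elements of the closure that are at most `frob S` lie in `extLefts S`. -/
lemma closure_le_mem {n : ℕ} (hfrob : frob S = n) (hn : 0 < n) :
    ∀ x ∈ AddSubmonoid.closure (extLefts S), x ≤ n → x ∈ extLefts S := by
  have hnS : n ∉ S.carrier := by
    rw [← hfrob]
    exact frob_not_mem (by omega)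
  intro x hx
  induction hx using AddSubmonoid.closure_induction with
  | mem y hy => exact fun _ => hy
  | zero => exact fun _ => Or.inl ⟨S.zero_mem, Set.mem_Iio.2 (by omega)⟩
  | add a b ha hb iha ihb =>
    intro hab
    have ha' : a ∈ extLefts S := iha (by omega)
    have hb' : b ∈ extLefts S := ihb (by omega)
    rcases eq_or_ne a 0 with rfl | ha0
    · simpa using hb'
    rcases eq_or_ne b 0 with rfl | hb0
    · simpa using ha'
    rcases extLefts_cases ha' with rfl | ⟨haS, halt⟩
    · rw [hfrob] at hab; omega
    rcases extLefts_cases hb' with rfl | ⟨hbS, hblt⟩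
    · rw [hfrob] at hab; omega
    have hsum : a + b ∈ S.carrier := S.add_mem haS hbS
    rcases eq_or_lt_of_le hab with heq | hlt
    · exact absurd (heq ▸ hsum) hnS
    · exact Or.inl ⟨hsum, Set.mem_Iio.2 (by omega)⟩

/-- Elements of the closure greater than `n` decompose as sums of two nonzero closure elements. -/
lemma closure_gt_decomp {n : ℕ} (hfrob : frob S = n) :
    ∀ x ∈ AddSubmonoid.closure (extLefts S), n < x →
      ∃ a b, a ∈ AddSubmonoid.closure (extLefts S) ∧ b ∈ AddSubmonoid.closure (extLefts S) ∧
        a ≠ 0 ∧ b ≠ 0 ∧ x = a + b := by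
  intro x hx
  induction hx using AddSubmonoid.closure_induction with
  | mem y hy =>
    intro hlt
    have := extLefts_le hy
    rw [hfrob] at this
    omega
  | zero => omega
  | add a b ha hb iha ihb =>
    intro hlt
    rcases eq_or_ne a 0 with rfl | ha0
    · simpa using ihb (by omega)
    rcases eq_or_ne b 0 with rfl | hb0
    · simpa using iha (by omega)
    exact ⟨a, b, ha, hb, ha0, hb0, rfl⟩

/-- The scaled-down semigroup associated to `S`. -/
noncomputable def phi (S : NumericalSemigroup) : NumericalSemigroup where
  carrier := {x | egcd S * x ∈ AddSubmonoid.closure (extLefts S)}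
  zero_mem := by
    simp only [Set.mem_setOf_eq, mul_zero]
    exact AddSubmonoid.zero_mem _
  add_mem := by
    intro a b ha hb
    simp only [Set.mem_setOf_eq] at ha hb ⊢
    rw [mul_add]
    exact AddSubmonoid.add_mem _ ha hb
  cofinite := by
    rcases Nat.eq_zero_or_pos (egcd S) with hd | hd
    · have : {x : ℕ | egcd S * x ∈ AddSubmonoid.closure (extLefts S)}ᶜ = ∅ := by
        ext x
        simp [hd, AddSubmonoid.zero_mem]
      rw [this]
      exact Set.finite_empty
    · obtain ⟨a, b, haC, hbC, hab⟩ := exists_consec_closure (S := S)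
      obtain ⟨b', rfl⟩ := egcd_dvd_closure b hbC
      have haC' : egcd S * (b' + 1) ∈ AddSubmonoid.closure (extLefts S) := by
        have : egcd S * (b' + 1) = a := by rw [hab]; ring
        rw [this]; exact haC
      apply Set.Finite.subset (Set.finite_Iio ((b' + 1) * (b' + 1)))
      intro x hx
      rw [Set.mem_compl_iff] at hx
      rw [Set.mem_Iio]
      by_contra hge
      push_neg at hge
      apply hx
      simp only [Set.mem_setOf_eq]
      rcases Nat.eq_zero_or_pos b' with rfl | hb'
      · -- egcd S ∈ closure, so egcd S * x = x • egcd S ∈ closure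
        have h1 : egcd S * 1 ∈ AddSubmonoid.closure (extLefts S) := by simpa using haC'
        have heq : egcd S * x = x • (egcd S * 1) := by rw [smul_eq_mul]; ring
        rw [heq]
        exact AddSubmonoid.nsmul_mem _ h1 x
      · set q := x / b' with hq
        set r := x % b' with hr
        have hx1 : b' * q + r = x := Nat.div_add_mod x b'
        have hrb : r < b' := Nat.mod_lt _ hb'
        have hsq : (b' + 1) * (b' + 1) = b' * b' + 2 * b' + 1 := by ring
        have hbq : b' * b' < b' * q := by
          have : b' * q = x - r := by omega
          have h2 : b' * b' + 2 * b' + 1 ≤ x := by omega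
          omega
        have hqb : b' ≤ q := le_of_lt (lt_of_mul_lt_mul_left hbq (Nat.zero_le _))
        obtain ⟨t, ht⟩ : ∃ t, q = r + t := ⟨q - r, by omega⟩
        have key : egcd S * x = t • (egcd S * b') + r • (egcd S * (b' + 1)) := by
          simp only [smul_eq_mul]
          have : x = b' * (r + t) + r := by rw [← ht]; omega
          rw [this]; ring
        rw [key]
        exact AddSubmonoid.add_mem _ (AddSubmonoid.nsmul_mem _ hbC t)
          (AddSubmonoid.nsmul_mem _ haC' r)

lemma mem_phi {x : ℕ} : x ∈ (phi S).carrier ↔ egcd S * x ∈ AddSubmonoid.closure (extLefts S) :=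
  Iff.rfl

lemma maxPrim_phi {n : ℕ} (hfrob : frob S = n) (hn : 0 < n) :
    maxPrim (phi S) = n / egcd S := by
  have hdvd : egcd S ∣ n := hfrob ▸ egcd_dvd_frob
  have hd0 : 0 < egcd S := by
    rcases Nat.eq_zero_or_pos (egcd S) with h0 | h0
    · rw [h0] at hdvd; omega
    · exact h0
  have hdm : egcd S * (n / egcd S) = n := Nat.mul_div_cancel' hdvd
  have hnS : n ∉ S.carrier := by
    rw [← hfrob]; exact frob_not_mem (by omega)
  have hnC : (n : ℕ) ∈ AddSubmonoid.closure (extLefts S) :=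
    AddSubmonoid.subset_closure (hfrob ▸ frob_mem_extLefts)
  have hmem : n / egcd S ∈ (phi S).carrier := by
    rw [mem_phi, hdm]
    exact hnC
  have hm0 : n / egcd S ≠ 0 := by
    intro h
    rw [h, mul_zero] at hdm
    omega
  have hprim : n / egcd S ∈ primitives (phi S) := by
    refine ⟨hmem, hm0, ?_⟩
    rintro ⟨a, b, ha, hb, ha0, hb0, habm⟩
    rw [mem_phi] at ha hb
    have hsum : egcd S * a + egcd S * b = n := by rw [← mul_add, ← habm, hdm]
    have haE : egcd S * a ∈ extLefts S := closure_le_mem hfrob hn _ ha (by omega)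
    have hbE : egcd S * b ∈ extLefts S := closure_le_mem hfrob hn _ hb (by omega)
    rcases extLefts_cases haE with hfa | ⟨haS, halt⟩
    · rw [hfrob] at hfa
      rw [hfa] at hsum
      have hb0' : egcd S * b = 0 := by omega
      rcases Nat.mul_eq_zero.1 hb0' with h | h
      · omega
      · exact hb0 h
    rcases extLefts_cases hbE with hfb | ⟨hbS, hblt⟩
    · rw [hfrob] at hfb
      have ha0' : egcd S * a = 0 := by omega
      rcases Nat.mul_eq_zero.1 ha0' with h | h
      · omega
      · exact ha0 h
    exact hnS (hsum ▸ S.add_mem haS hbS)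
  have hub : ∀ p ∈ primitives (phi S), p ≤ n / egcd S := by
    rintro p ⟨hpS, hp0, hnd⟩
    by_contra h
    push_neg at h
    rw [mem_phi] at hpS
    have hgt : n < egcd S * p := by
      calc n = egcd S * (n / egcd S) := hdm.symm
      _ < egcd S * p := (Nat.mul_lt_mul_left hd0).2 h
    obtain ⟨a, b, haC, hbC, ha0, hb0, habe⟩ := closure_gt_decomp hfrob _ hpS hgt
    obtain ⟨a', rfl⟩ := egcd_dvd_closure a haC
    obtain ⟨b', rfl⟩ := egcd_dvd_closure b hbC
    have ha'0 : a' ≠ 0 := by rintro rfl; simp at ha0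
    have hb'0 : b' ≠ 0 := by rintro rfl; simp at hb0
    have hpab : p = a' + b' := by
      have hmul : egcd S * p = egcd S * (a' + b') := by rw [habe]; ring
      exact Nat.eq_of_mul_eq_mul_left hd0 hmul
    exact hnd ⟨a', b', haC, hbC, ha'0, hb'0, hpab⟩
  refine le_antisymm ?_ (le_maxPrim hprim)
  exact csSup_le primitives_nonempty hub

end NumericalSemigroup

namespace NumericalSemigroup

variable {S T : NumericalSemigroup}

/-- The scaled-up semigroup associated to `T` and a scale factor `d`. -/
noncomputable def psi (d : ℕ) (T : NumericalSemigroup) : NumericalSemigroup where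
  carrier := (fun t => d * t) '' (T.carrier ∩ Set.Iio (maxPrim T)) ∪ Set.Ioi (d * maxPrim T)
  zero_mem := Or.inl ⟨0, ⟨T.zero_mem, Set.mem_Iio.2 maxPrim_pos⟩, mul_zero d⟩
  add_mem := by
    intro a b ha hb
    rcases hb with ⟨t', ⟨ht'T, ht'lt⟩, rfl⟩ | hb
    · rcases ha with ⟨t, ⟨htT, htlt⟩, rfl⟩ | ha
      · rcases Nat.eq_zero_or_pos d with rfl | hd0
        · exact Or.inl ⟨0, ⟨T.zero_mem, Set.mem_Iio.2 maxPrim_pos⟩, by simp⟩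
        have hsum : t + t' ∈ T.carrier := T.add_mem htT ht'T
        rcases lt_trichotomy (t + t') (maxPrim T) with hlt | heq | hgt
        · exact Or.inl ⟨t + t', ⟨hsum, Set.mem_Iio.2 hlt⟩, by ring⟩
        · exfalso
          have htlt' := Set.mem_Iio.1 htlt
          have ht'lt' := Set.mem_Iio.1 ht'lt
          rcases eq_or_ne t 0 with rfl | ht0
          · omega
          rcases eq_or_ne t' 0 with rfl | ht'0
          · omega
          exact (maxPrim_mem (S := T)).2.2 ⟨t, t', htT, ht'T, ht0, ht'0, heq.symm⟩
        · refine Or.inr (Set.mem_Ioi.2 ?_)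
          show d * maxPrim T < d * t + d * t'
          have : d * maxPrim T < d * (t + t') := (Nat.mul_lt_mul_left hd0).2 hgt
          rw [mul_add] at this
          exact this
      · refine Or.inr (Set.mem_Ioi.2 ?_)
        show d * maxPrim T < a + d * t'
        have := Set.mem_Ioi.1 ha
        omega
    · refine Or.inr (Set.mem_Ioi.2 ?_)
      show d * maxPrim T < a + b
      have := Set.mem_Ioi.1 hb
      omega
  cofinite := by
    apply Set.Finite.subset (Set.finite_Iic (d * maxPrim T))
    intro x hx
    rw [Set.mem_compl_iff] at hx
    refine Set.mem_Iic.2 ?_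
    by_contra h
    exact hx (Or.inr (Set.mem_Ioi.2 (by omega)))

lemma frob_psi {d : ℕ} (hd : 0 < d) (T : NumericalSemigroup) :
    frob (psi d T) = d * maxPrim T := by
  have hnmem : d * maxPrim T ∉ (psi d T).carrier := by
    rintro (⟨t, ⟨htT, htlt⟩, hteq⟩ | hmem)
    · have := Nat.eq_of_mul_eq_mul_left hd hteq
      have := Set.mem_Iio.1 htlt
      omega
    · exact lt_irrefl _ (Set.mem_Ioi.1 hmem)
  have hub : ∀ x ∈ ((psi d T).carrierᶜ : Set ℕ), x ≤ d * maxPrim T := by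
    intro x hx
    by_contra h
    exact hx (Or.inr (Set.mem_Ioi.2 (by omega)))
  exact le_antisymm (csSup_le ⟨_, hnmem⟩ hub) (le_csSup (psi d T).cofinite.bddAbove hnmem)

lemma extLefts_psi {d : ℕ} (hd : 0 < d) (T : NumericalSemigroup) :
    extLefts (psi d T) =
      (fun t => d * t) '' (T.carrier ∩ Set.Iio (maxPrim T)) ∪ {d * maxPrim T} := by
  unfold extLefts lefts
  rw [frob_psi hd]
  have himg : (psi d T).carrier ∩ Set.Iio (d * maxPrim T) =
      (fun t => d * t) '' (T.carrier ∩ Set.Iio (maxPrim T)) := by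
    ext x
    constructor
    · rintro ⟨himg | hIoi, hlt⟩
      · exact himg
      · have := Set.mem_Ioi.1 hIoi
        have := Set.mem_Iio.1 hlt
        omega
    · rintro ⟨t, ⟨htT, htlt⟩, rfl⟩
      exact ⟨Or.inl ⟨t, ⟨htT, htlt⟩, rfl⟩,
        Set.mem_Iio.2 ((Nat.mul_lt_mul_left hd).2 (Set.mem_Iio.1 htlt))⟩
  rw [himg]

lemma egcd_psi {d : ℕ} (hd : 0 < d) (T : NumericalSemigroup) : egcd (psi d T) = d := by
  have hE := extLefts_psi hd T
  have h1 : d ∣ egcd (psi d T) := by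
    refine dvd_egcd ?_
    rw [hE]
    rintro x (⟨t, -, rfl⟩ | hx)
    · exact Dvd.intro t rfl
    · rw [Set.mem_singleton_iff] at hx
      subst hx
      exact Dvd.intro (maxPrim T) rfl
  have h2 : egcd (psi d T) ∣ d := by
    have hgp : ∀ p ∈ primitives T, egcd (psi d T) ∣ d * p := by
      intro p hp
      have hple : p ≤ maxPrim T := le_maxPrim hp
      rcases eq_or_lt_of_le hple with heq | hlt
      · subst heq
        exact egcd_dvd (hE ▸ Or.inr rfl)
      · exact egcd_dvd (hE ▸ Or.inl ⟨p, ⟨hp.1, Set.mem_Iio.2 hlt⟩, rfl⟩)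
    have hall : ∀ x ∈ T.carrier, egcd (psi d T) ∣ d * x := by
      intro x hx
      refine strongInd (S := T) (fun y => egcd (psi d T) ∣ d * y) (by simp) hgp ?_ x hx
      intro a b _ _ _ _ pa pb
      rw [mul_add]
      exact dvd_add pa pb
    have hk1 := hall _ (succ_frob_mem (S := T))
    have hk2 := hall _ (mem_of_frob_lt (show frob T < frob T + 2 by omega))
    have hsub := Nat.dvd_sub hk2 hk1
    have hring : d * (frob T + 2) = d * (frob T + 1) + d := by ring
    have heq : d * (frob T + 2) - d * (frob T + 1) = d := by omega
    rwa [heq] at hsub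
  exact Nat.dvd_antisymm h2 h1

lemma psi_carrier_inv {d : ℕ} (hd : 0 < d) (T : NumericalSemigroup) :
    {x : ℕ | egcd (psi d T) * x ∈ AddSubmonoid.closure (extLefts (psi d T))} = T.carrier := by
  rw [egcd_psi hd, extLefts_psi hd]
  ext x
  simp only [Set.mem_setOf_eq]
  constructor
  · intro hx
    have hrep : ∀ y ∈ AddSubmonoid.closure
        ((fun t => d * t) '' (T.carrier ∩ Set.Iio (maxPrim T)) ∪ {d * maxPrim T}),
        ∃ t, t ∈ T.carrier ∧ y = d * t := by
      intro y hy
      induction hy using AddSubmonoid.closure_induction with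
      | mem z hz =>
        rcases hz with ⟨t, ⟨htT, -⟩, rfl⟩ | hz
        · exact ⟨t, htT, rfl⟩
        · rw [Set.mem_singleton_iff] at hz
          exact ⟨maxPrim T, (maxPrim_mem (S := T)).1, hz⟩
      | zero => exact ⟨0, T.zero_mem, by simp⟩
      | add a b _ _ iha ihb =>
        obtain ⟨t, htT, rfl⟩ := iha
        obtain ⟨t', ht'T, rfl⟩ := ihb
        exact ⟨t + t', T.add_mem htT ht'T, by ring⟩
    obtain ⟨t, htT, hteq⟩ := hrep _ hx
    rwa [Nat.eq_of_mul_eq_mul_left hd hteq]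
  · intro hx
    refine strongInd (S := T)
      (fun y => d * y ∈ AddSubmonoid.closure
        ((fun t => d * t) '' (T.carrier ∩ Set.Iio (maxPrim T)) ∪ {d * maxPrim T}))
      (by simpa using AddSubmonoid.zero_mem _) ?_ ?_ x hx
    · intro p hp
      have hple : p ≤ maxPrim T := le_maxPrim hp
      rcases eq_or_lt_of_le hple with heq | hlt
      · subst heq
        exact AddSubmonoid.subset_closure (Or.inr rfl)
      · exact AddSubmonoid.subset_closure (Or.inl ⟨p, ⟨hp.1, Set.mem_Iio.2 hlt⟩, rfl⟩)
    · intro a b _ _ _ _ pa pb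
      rw [mul_add]
      exact AddSubmonoid.add_mem _ pa pb

lemma psi_phi {n : ℕ} (hfrob : frob S = n) (hn : 0 < n) :
    (psi (egcd S) (phi S)).carrier = S.carrier := by
  have hdvd : egcd S ∣ n := hfrob ▸ egcd_dvd_frob
  have hd0 : 0 < egcd S := by
    rcases Nat.eq_zero_or_pos (egcd S) with h0 | h0
    · rw [h0] at hdvd; omega
    · exact h0
  have hmp : maxPrim (phi S) = n / egcd S := maxPrim_phi hfrob hn
  have hdm : egcd S * maxPrim (phi S) = n := by
    rw [hmp]
    exact Nat.mul_div_cancel' hdvd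
  have hnS : n ∉ S.carrier := by
    rw [← hfrob]; exact frob_not_mem (by omega)
  show (fun t => egcd S * t) '' ((phi S).carrier ∩ Set.Iio (maxPrim (phi S))) ∪
      Set.Ioi (egcd S * maxPrim (phi S)) = S.carrier
  rw [hdm]
  have himg : (fun t => egcd S * t) '' ((phi S).carrier ∩ Set.Iio (maxPrim (phi S))) =
      lefts S := by
    ext y
    constructor
    · rintro ⟨t, ⟨htC, htlt⟩, rfl⟩
      rw [mem_phi] at htC
      have hylt : egcd S * t < n := by
        rw [← hdm]
        exact (Nat.mul_lt_mul_left hd0).2 (Set.mem_Iio.1 htlt)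
      have hyE : egcd S * t ∈ extLefts S := closure_le_mem hfrob hn _ htC (le_of_lt hylt)
      rcases extLefts_cases hyE with hf | ⟨hS', hlt'⟩
      · rw [hfrob] at hf; omega
      · exact ⟨hS', Set.mem_Iio.2 hlt'⟩
    · rintro ⟨hyS, hylt⟩
      have hyE : y ∈ extLefts S := Or.inl ⟨hyS, hylt⟩
      have hyC : y ∈ AddSubmonoid.closure (extLefts S) := AddSubmonoid.subset_closure hyE
      obtain ⟨t, rfl⟩ := egcd_dvd_closure y hyC
      refine ⟨t, ⟨?_, ?_⟩, rfl⟩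
      · rw [mem_phi]; exact hyC
      · refine Set.mem_Iio.2 ?_
        refine (Nat.mul_lt_mul_left hd0).1 ?_
        rw [hdm]
        have := Set.mem_Iio.1 hylt
        rw [hfrob] at this
        exact this
  rw [himg]
  ext x
  constructor
  · rintro (⟨hxS, -⟩ | hx)
    · exact hxS
    · refine mem_of_frob_lt ?_
      rw [hfrob]
      exact Set.mem_Ioi.1 hx
  · intro hx
    rcases lt_trichotomy x n with h | h | h
    · exact Or.inl ⟨hx, Set.mem_Iio.2 (by rw [hfrob]; exact h)⟩
    · exact absurd (h ▸ hx) hnS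
    · exact Or.inr (Set.mem_Ioi.2 h)

end NumericalSemigroup

open NumericalSemigroup in
/-- The central bijection: numerical semigroups with Frobenius number `n` correspond to pairs
of a divisor `d` of `n` and a numerical semigroup with maximum primitive `n / d`. -/
noncomputable def frobEquiv (n : ℕ) (hn : 0 < n) :
    {S : NumericalSemigroup | frob S = n} ≃
      Σ d : {d : ℕ // d ∈ n.divisors}, {T : NumericalSemigroup | maxPrim T = n / (d : ℕ)} where
  toFun := fun S =>
    ⟨⟨egcd S.1, Nat.mem_divisors.2 ⟨by
        have h := egcd_dvd_frob (S := S.1)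
        rwa [show frob S.1 = n from S.2] at h, by omega⟩⟩,
      ⟨phi S.1, maxPrim_phi (show frob S.1 = n from S.2) hn⟩⟩
  invFun := fun x =>
    ⟨psi x.1.1 x.2.1, by
      have hd0 : 0 < (x.1 : ℕ) := Nat.pos_of_mem_divisors x.1.2
      have hdvd : (x.1 : ℕ) ∣ n := (Nat.mem_divisors.1 x.1.2).1
      have hT : maxPrim (x.2 : NumericalSemigroup) = n / (x.1 : ℕ) := x.2.2
      show frob (psi x.1.1 x.2.1) = n
      rw [frob_psi hd0, hT]
      exact Nat.mul_div_cancel' hdvd⟩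
  left_inv := fun S => Subtype.ext (ext' (psi_phi (show frob S.1 = n from S.2) hn))
  right_inv := by
    rintro ⟨⟨d, hd⟩, ⟨T, hT⟩⟩
    have hd0 : 0 < d := Nat.pos_of_mem_divisors hd
    have h1 : egcd (psi d T) = d := egcd_psi hd0 T
    have h2 : phi (psi d T) = T := ext' (psi_carrier_inv hd0 T)
    refine Sigma.ext (Subtype.ext h1) ?_
    refine (Subtype.heq_iff_coe_eq ?_).2 h2
    intro U
    show (maxPrim U = n / egcd (psi d T)) ↔ (maxPrim U = n / d)
    rw [h1]

open NumericalSemigroup in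
lemma countFrob_eq_sum {n : ℕ} (hn : 0 < n) :
    countFrob n = ∑ d ∈ n.divisors, countMaxPrim (n / d) := by
  classical
  rw [countFrob, ← Nat.card_coe_set_eq, Nat.card_congr (frobEquiv n hn)]
  haveI : ∀ d : {d : ℕ // d ∈ n.divisors},
      Fintype ({T : NumericalSemigroup | maxPrim T = n / (d : ℕ)} : Set _) :=
    fun d => (finite_setOf_maxPrim _).fintype
  rw [Nat.card_eq_fintype_card, Fintype.card_sigma]
  rw [← Finset.sum_coe_sort n.divisors (fun d => countMaxPrim (n / d))]
  refine Finset.sum_congr rfl fun d _ => ?_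
  rw [countMaxPrim, ← Nat.card_coe_set_eq, Nat.card_eq_fintype_card]

theorem countMaxPrim_moebius' (n : ℕ) (hn : 2 < n) :
    (countMaxPrim n : ℤ)
      = ∑ d ∈ n.divisors, ArithmeticFunction.moebius (n / d) * (countFrob d : ℤ) := by
  have key : ∀ m : ℕ, m > 0 →
      ∑ i ∈ m.divisors, (countMaxPrim i : ℤ) = (countFrob m : ℤ) := by
    intro m hm
    have h1 : countFrob m = ∑ d ∈ m.divisors, countMaxPrim (m / d) := countFrob_eq_sum hm
    have h2 : ∑ d ∈ m.divisors, countMaxPrim (m / d) = ∑ d ∈ m.divisors, countMaxPrim d :=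
      Nat.sum_div_divisors m countMaxPrim
    rw [h1, h2, Nat.cast_sum]
  have hinv := (ArithmeticFunction.sum_eq_iff_sum_smul_moebius_eq
      (f := fun k => (countMaxPrim k : ℤ)) (g := fun k => (countFrob k : ℤ))).mp key n (by omega)
  rw [← hinv]
  have hconv := Nat.sum_divisorsAntidiagonal'
      (f := fun a b => (ArithmeticFunction.moebius a : ℤ) * (countFrob b : ℤ)) (n := n)
  rw [← hconv]
  exact Finset.sum_congr rfl fun x _ => zsmul_eq_mul _ _


theorem countMaxPrim_moebius (n : ℕ) (hn : 2 < n) :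
    (countMaxPrim n : ℤ)
      = ∑ d ∈ n.divisors, ArithmeticFunction.moebius (n / d) * (countFrob d : ℤ) :=
  countMaxPrim_moebius' n hn
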